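/- Let b ∈ ℝ, b ≠ 0, and for m ∈ ℕ let G_m : ℝ → ℝ with G_m ∈ L¹(ℝ), x·G_m(x) ∈ L¹(ℝ), G_m → G and x G_m → x G in L¹(ℝ) as m → ∞, and assume ∫_ℝ G_m(x) dx = 0 for all m ∈ ℕ. Then ∫_ℝ G(x) dx = 0, and Ĝ_m(p)/(p⁴ − ibp) → Ĝ(p)/(p⁴ − ibp) and p⁴Ĝ_m(p)/(p⁴ − ibp) → p⁴Ĝ(p)/(p⁴ − ibp) in L^∞(ℝ) as m → ∞; in particular ‖Ĝ_m(p)/(p⁴ − ibp) − Ĝ(p)/(p⁴ − ibp)‖_{L^∞(ℝ)} ≤ ‖xG_m(x) − xG(x)‖_{L¹(ℝ)}/(√(2π)|b|). -/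

import Mathlib

/-!
Passing `∫ G_m = 0` to the `L¹` limit shows that every difference `Δ = G_m - G` has mean zero, so
`Δ̂(p) = (2π)^{-1/2} ∫ Δ(x) (e^{-ipx} - 1) dx`, and `|e^{-ipx} - 1| ≤ |p x|` gives
`|Δ̂(p)| ≤ |p| ‖xΔ‖₁ / √(2π)`. The imaginary part of the symbol, `|p⁴ - ibp| ≥ |b| |p|`, cancels
the factor `|p|`. For the second quotient the real part, `|p⁴ - ibp| ≥ p⁴`, together with
`|Δ̂| ≤ ‖Δ‖₁ / √(2π)` suffices.
-/

open MeasureTheory Real Filter Topology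

/-- The Fourier transform `Ĝ(p) = (1/√(2π)) ∫ G(x) e^{-ipx} dx`. -/
noncomputable def fourierTransform (G : ℝ → ℝ) (p : ℝ) : ℂ :=
  (1 / Real.sqrt (2 * Real.pi)) * ∫ x : ℝ, (G x : ℂ) * Complex.exp (-Complex.I * p * x)

/-- The symbol `p⁴ - a - i b p` of the operator `d⁴/dx⁴ - b d/dx - a`. -/
noncomputable def denom (a b p : ℝ) : ℂ := (p : ℂ) ^ 4 - (a : ℂ) - Complex.I * b * p

lemma tendsto_integral_of_tendsto_integral_norm_sub {α E ι : Type*} [MeasurableSpace α]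
    [NormedAddCommGroup E] [NormedSpace ℝ E] {μ : Measure α} {l : Filter ι}
    {F : ι → α → E} {f : α → E} (hF : ∀ i, Integrable (F i) μ) (hf : Integrable f μ)
    (h : Tendsto (fun i => ∫ x, ‖F i x - f x‖ ∂μ) l (𝓝 0)) :
    Tendsto (fun i => ∫ x, F i x ∂μ) l (𝓝 (∫ x, f x ∂μ)) := by
  rw [tendsto_iff_norm_sub_tendsto_zero]
  refine squeeze_zero (fun i => norm_nonneg _) (fun i => ?_) h
  rw [← integral_sub (hF i) hf]
  exact norm_integral_le_integral_norm _

lemma norm_exp_neg_I_mul_mul (p x : ℝ) : ‖Complex.exp (-Complex.I * p * x)‖ = 1 := by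
  rw [Complex.norm_exp]; simp

lemma norm_exp_neg_I_mul_mul_sub_one_le (p x : ℝ) :
    ‖Complex.exp (-Complex.I * p * x) - 1‖ ≤ |p| * |x| := by
  have h := Real.norm_exp_I_mul_ofReal_sub_one_le (x := -(p * x))
  rw [Real.norm_eq_abs, abs_neg, abs_mul] at h
  convert h using 4
  push_cast; ring

lemma integrable_ofReal_mul_exp_neg_I_mul {G : ℝ → ℝ} (hG : Integrable G) (p : ℝ) :
    Integrable (fun x : ℝ => (G x : ℂ) * Complex.exp (-Complex.I * p * x)) :=
  hG.ofReal.mul_bdd (by fun_prop) (.of_forall fun x => (norm_exp_neg_I_mul_mul p x).le)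

lemma fourierTransform_sub {F G : ℝ → ℝ} (hF : Integrable F) (hG : Integrable G) (p : ℝ) :
    fourierTransform (F - G) p = fourierTransform F p - fourierTransform G p := by
  simp only [fourierTransform, ← mul_sub, Pi.sub_apply, Complex.ofReal_sub, sub_mul,
    integral_sub (integrable_ofReal_mul_exp_neg_I_mul hF p)
      (integrable_ofReal_mul_exp_neg_I_mul hG p)]

lemma norm_fourierTransform_le (G : ℝ → ℝ) (p : ℝ) :
    ‖fourierTransform G p‖ ≤ (∫ x, |G x|) / √(2 * π) := by
  calc ‖fourierTransform G p‖
      = ‖∫ x : ℝ, (G x : ℂ) * Complex.exp (-Complex.I * p * x)‖ / √(2 * π) := by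
        rw [fourierTransform, norm_mul, norm_div, norm_one, Complex.norm_real,
          Real.norm_of_nonneg (by positivity)]
        ring
    _ ≤ (∫ x, |G x|) / √(2 * π) := by
        gcongr
        refine (norm_integral_le_integral_norm _).trans_eq ?_
        simp only [norm_mul, norm_exp_neg_I_mul_mul, mul_one, Complex.norm_real, Real.norm_eq_abs]

lemma norm_fourierTransform_le_of_integral_eq_zero {G : ℝ → ℝ} (hG : Integrable G)
    (hxG : Integrable (fun x => x * G x)) (h0 : ∫ x, G x = 0) (p : ℝ) :
    ‖fourierTransform G p‖ ≤ |p| * (∫ x, |x * G x|) / √(2 * π) := by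
  have hshift : ∫ x : ℝ, (G x : ℂ) * Complex.exp (-Complex.I * p * x)
      = ∫ x : ℝ, (G x : ℂ) * (Complex.exp (-Complex.I * p * x) - 1) := by
    have hGc : Integrable (fun x => (G x : ℂ)) := hG.ofReal
    simp only [mul_sub, mul_one]
    rw [integral_sub (integrable_ofReal_mul_exp_neg_I_mul hG p) hGc, integral_complex_ofReal, h0,
      Complex.ofReal_zero, sub_zero]
  have hpointwise (x : ℝ) :
      ‖(G x : ℂ) * (Complex.exp (-Complex.I * p * x) - 1)‖ ≤ |p| * |x * G x| := by
    rw [norm_mul, Complex.norm_real, Real.norm_eq_abs, abs_mul]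
    nlinarith [norm_exp_neg_I_mul_mul_sub_one_le p x, abs_nonneg (G x)]
  calc ‖fourierTransform G p‖
      = ‖∫ x : ℝ, (G x : ℂ) * (Complex.exp (-Complex.I * p * x) - 1)‖ / √(2 * π) := by
        rw [fourierTransform, norm_mul, norm_div, norm_one, Complex.norm_real,
          Real.norm_of_nonneg (by positivity), hshift]
        ring
    _ ≤ (∫ x, |p| * |x * G x|) / √(2 * π) := by
        gcongr
        exact norm_integral_le_of_norm_le (hxG.abs.const_mul _) (.of_forall hpointwise)
    _ = |p| * (∫ x, |x * G x|) / √(2 * π) := by rw [integral_const_mul]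

lemma abs_mul_abs_le_norm_denom (a b p : ℝ) : |b| * |p| ≤ ‖denom a b p‖ := by
  have him : (denom a b p).im = -(b * p) := by simp [denom, ← Complex.ofReal_pow]
  simpa [him, abs_mul] using Complex.abs_im_le_norm (denom a b p)

lemma abs_pow_four_le_norm_denom {a : ℝ} (ha : a ≤ 0) (b p : ℝ) : |p| ^ 4 ≤ ‖denom a b p‖ := by
  have hre : (denom a b p).re = p ^ 4 - a := by simp [denom, ← Complex.ofReal_pow]
  calc |p| ^ 4 = p ^ 4 := by rw [pow_abs, abs_of_nonneg (by positivity)]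
    _ ≤ |(denom a b p).re| := by rw [hre]; exact le_abs.2 (.inl (by linarith))
    _ ≤ ‖denom a b p‖ := Complex.abs_re_le_norm _

lemma norm_fourierTransform_div_denom_le {G : ℝ → ℝ} (hG : Integrable G)
    (hxG : Integrable (fun x => x * G x)) (h0 : ∫ x, G x = 0) {b : ℝ} (hb : b ≠ 0) (a p : ℝ) :
    ‖fourierTransform G p / denom a b p‖ ≤ (∫ x, |x * G x|) / (√(2 * π) * |b|) := by
  rw [norm_div]
  refine div_le_of_le_mul₀ (norm_nonneg _) (by positivity) ?_
  calc ‖fourierTransform G p‖ ≤ |p| * (∫ x, |x * G x|) / √(2 * π) :=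
        norm_fourierTransform_le_of_integral_eq_zero hG hxG h0 p
    _ = (∫ x, |x * G x|) / (√(2 * π) * |b|) * (|b| * |p|) := by
        field_simp [abs_ne_zero.2 hb]
    _ ≤ (∫ x, |x * G x|) / (√(2 * π) * |b|) * ‖denom a b p‖ := by
        gcongr; exact abs_mul_abs_le_norm_denom a b p

lemma norm_pow_four_mul_fourierTransform_div_denom_le (G : ℝ → ℝ) {a : ℝ} (ha : a ≤ 0) (b p : ℝ) :
    ‖(p : ℂ) ^ 4 * fourierTransform G p / denom a b p‖ ≤ (∫ x, |G x|) / √(2 * π) := by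
  rw [norm_div, norm_mul, norm_pow, Complex.norm_real, Real.norm_eq_abs]
  refine div_le_of_le_mul₀ (norm_nonneg _) (by positivity) ?_
  calc |p| ^ 4 * ‖fourierTransform G p‖ ≤ |p| ^ 4 * ((∫ x, |G x|) / √(2 * π)) := by
        gcongr; exact norm_fourierTransform_le G p
    _ ≤ (∫ x, |G x|) / √(2 * π) * ‖denom a b p‖ := by
        rw [mul_comm]; gcongr; exact abs_pow_four_le_norm_denom ha b p

lemma iSup_norm_fourierTransform_div_denom_sub_le {F G : ℝ → ℝ} (hF : Integrable F)
    (hG : Integrable G) (hxF : Integrable (fun x => x * F x)) (hxG : Integrable (fun x => x * G x))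
    (hF0 : ∫ x, F x = 0) (hG0 : ∫ x, G x = 0) {b : ℝ} (hb : b ≠ 0) (a : ℝ) :
    ⨆ p, ‖fourierTransform F p / denom a b p - fourierTransform G p / denom a b p‖ ≤
      (∫ x, |x * F x - x * G x|) / (√(2 * π) * |b|) := by
  have hxΔ : Integrable (fun x => x * (F - G) x) :=
    (hxF.sub hxG).congr (.of_forall fun x => (mul_sub x _ _).symm)
  have hΔ0 : ∫ x, (F - G) x = 0 := by
    simp only [Pi.sub_apply]
    rw [integral_sub hF hG, hF0, hG0, sub_zero]
  refine Real.iSup_le (fun p => ?_) (by positivity)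
  rw [div_sub_div_same, ← fourierTransform_sub hF hG]
  simpa only [Pi.sub_apply, mul_sub] using
    norm_fourierTransform_div_denom_le (hF.sub hG) hxΔ hΔ0 hb a p

lemma iSup_norm_pow_four_mul_fourierTransform_div_denom_sub_le {F G : ℝ → ℝ} (hF : Integrable F)
    (hG : Integrable G) {a : ℝ} (ha : a ≤ 0) (b : ℝ) :
    ⨆ p : ℝ, ‖(p : ℂ) ^ 4 * fourierTransform F p / denom a b p -
        (p : ℂ) ^ 4 * fourierTransform G p / denom a b p‖ ≤
      (∫ x, |F x - G x|) / √(2 * π) := by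
  refine Real.iSup_le (fun p => ?_) (by positivity)
  rw [div_sub_div_same, ← mul_sub, ← fourierTransform_sub hF hG]
  exact norm_pow_four_mul_fourierTransform_div_denom_le _ ha b p

/-- Lemma A2, case b): for `a = 0`, `b ≠ 0`, `G_m, xG_m ∈ L¹(ℝ)` with `G_m → G` and
`xG_m → xG` in `L¹(ℝ)` and `∫ G_m = 0`, one has `∫ G = 0`, the quotients converge in
`L^∞(ℝ)`, and the explicit bound
`sup_p ‖Ĝ_m/(p⁴-ibp) - Ĝ/(p⁴-ibp)‖ ≤ ‖xG_m - xG‖_{L¹}/(√(2π)|b|)` holds. -/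
theorem quotient_convergence_zero_a
    (b : ℝ) (hb : b ≠ 0)
    (G : ℝ → ℝ) (Gm : ℕ → ℝ → ℝ)
    (hGm : ∀ m : ℕ, Integrable (Gm m) (volume : Measure ℝ))
    (hG : Integrable G (volume : Measure ℝ))
    (hxGm : ∀ m : ℕ, Integrable (fun x => x * Gm m x) (volume : Measure ℝ))
    (hxG : Integrable (fun x => x * G x) (volume : Measure ℝ))
    (hconv : Tendsto (fun m : ℕ => ∫ x : ℝ, |Gm m x - G x|) atTop (𝓝 0))
    (hxconv : Tendsto (fun m : ℕ => ∫ x : ℝ, |x * Gm m x - x * G x|) atTop (𝓝 0))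
    (horth : ∀ m : ℕ, (∫ x : ℝ, Gm m x) = 0) :
    (∫ x : ℝ, G x) = 0 ∧
    Tendsto (fun m : ℕ =>
        ⨆ p : ℝ, ‖fourierTransform (Gm m) p / denom 0 b p -
          fourierTransform G p / denom 0 b p‖) atTop (𝓝 0) ∧
    Tendsto (fun m : ℕ =>
        ⨆ p : ℝ, ‖(p : ℂ) ^ 4 * fourierTransform (Gm m) p / denom 0 b p -
          (p : ℂ) ^ 4 * fourierTransform G p / denom 0 b p‖) atTop (𝓝 0) ∧
    ∀ m : ℕ,
      (⨆ p : ℝ, ‖fourierTransform (Gm m) p / denom 0 b p -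
        fourierTransform G p / denom 0 b p‖) ≤
      (∫ x : ℝ, |x * Gm m x - x * G x|) / (Real.sqrt (2 * Real.pi) * |b|) := by
  have hlim := tendsto_integral_of_tendsto_integral_norm_sub hGm hG
    (by simpa only [Real.norm_eq_abs] using hconv)
  simp only [horth] at hlim
  have hG0 : ∫ x, G x = 0 := tendsto_nhds_unique hlim tendsto_const_nhds
  have hbound (m : ℕ) := iSup_norm_fourierTransform_div_denom_sub_le (hGm m) hG (hxGm m) hxG
    (horth m) hG0 hb 0
  refine ⟨hG0, ?_, ?_, hbound⟩
  · refine squeeze_zero (fun m => Real.iSup_nonneg fun p => norm_nonneg _) hbound ?_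
    simpa using hxconv.div_const _
  · refine squeeze_zero (fun m => Real.iSup_nonneg fun p => norm_nonneg _)
      (fun m => iSup_norm_pow_four_mul_fourierTransform_div_denom_sub_le (hGm m) hG le_rfl b) ?_
    simpa using hconv.div_const _
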